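/- Let X be a Tychonoff (completely regular Hausdorff) space and let D be a closed discrete subset of X. Then for every f ∈ C(X) and every neighborhood basis B of f in the graph topology τ_Γ, the cardinality of D is at most the cardinality of B. In particular, the character of the space (C(X), τ_Γ) is at least |D|. -/

import Mathlib

open TopologicalSpace Set

/-- The graph of a continuous map, as a subset of `X × Y`. -/
def graphSet {X Y : Type*} [TopologicalSpace X] [TopologicalSpace Y] (f : C(X, Y)) :
    Set (X × Y) := {p | p.2 = f p.1}

/-- The graph topology `τ_Γ` on `C(X, Y)`, generated by the sets
`F_G = {f | graph f ⊆ G}` for `G` open in `X × Y`. -/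
def graphTopology (X Y : Type*) [TopologicalSpace X] [TopologicalSpace Y] :
    TopologicalSpace C(X, Y) :=
  generateFrom {S | ∃ G : Set (X × Y), IsOpen G ∧ S = {f : C(X, Y) | graphSet f ⊆ G}}

/-!
If `#B < #D`, choose an injection `S ↦ d_S` of `B` into `D`. By complete regularity every
neighbourhood `S` of `f` contains a bump `g_S` of `f` with `g_S d_S ≠ f d_S`. As `D` is closed
and discrete, the points `(d_S, g_S d_S)` form a closed set `E` missing the graph of `f`, so
`{g | graph g ⊆ Eᶜ}` is a neighbourhood of `f` that contains no member of `B`.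
-/

open Filter Topology Function

theorem LocallyFinite.singleton_of_isClosed_of_discreteTopology {X : Type*} [TopologicalSpace X]
    {D : Set X} (hD : IsClosed D) [DiscreteTopology D] :
    LocallyFinite fun d : D => ({(d : X)} : Set X) := by
  intro x
  have hdisj : Disjoint (𝓝[≠] x) (𝓟 D) :=
    isClosed_and_discrete_iff.mp ⟨hD, DiscreteTopology.isDiscrete⟩ x
  obtain ⟨U, hU, hUD⟩ : ∃ U ∈ 𝓝 x, ∀ y ∈ U, y ∈ D → y = x := by
    rw [disjoint_principal_right, mem_nhdsWithin_iff_eventually] at hdisj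
    exact ⟨_, hdisj, fun y hy hyD => by_contra fun hne => hy hne hyD⟩
  refine ⟨U, hU, Set.Subsingleton.finite ?_⟩
  rintro d ⟨_, rfl, hd⟩ d' ⟨_, rfl, hd'⟩
  exact Subtype.ext ((hUD _ hd d.2).trans (hUD _ hd' d'.2).symm)

theorem isClosed_iUnion_singleton_of_injective {X Y ι : Type*} [TopologicalSpace X]
    [TopologicalSpace Y] [T1Space X] [T1Space Y] {D : Set X} (hD : IsClosed D)
    [DiscreteTopology D] {e : ι → D} (he : Injective e) (y : ι → Y) :
    IsClosed (⋃ i, {((e i : X), y i)}) :=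
  ((LocallyFinite.singleton_of_isClosed_of_discreteTopology hD).comp_injective he
      |>.preimage_continuous continuous_fst |>.subset
        fun _ => singleton_subset_iff.2 rfl).isClosed_iUnion fun _ => isClosed_singleton

section GraphTopology

variable {X Y : Type*} [TopologicalSpace X] [TopologicalSpace Y]

theorem graphSet_subset_iff {f : C(X, Y)} {G : Set (X × Y)} :
    graphSet f ⊆ G ↔ ∀ x, (x, f x) ∈ G := by
  refine ⟨fun h x => h rfl, ?_⟩
  rintro h ⟨x, _⟩ (rfl : _ = f x)
  exact h x

theorem isTopologicalBasis_graphTopology :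
    @IsTopologicalBasis C(X, Y) (graphTopology X Y)
      {S | ∃ G : Set (X × Y), IsOpen G ∧ S = {f : C(X, Y) | graphSet f ⊆ G}} := by
  refine @IsTopologicalBasis.mk _ (graphTopology X Y) _ ?_ ?_ rfl
  · rintro _ ⟨G₁, hG₁, rfl⟩ _ ⟨G₂, hG₂, rfl⟩ f hf
    exact ⟨_, ⟨G₁ ∩ G₂, hG₁.inter hG₂, rfl⟩, subset_inter hf.1 hf.2,
      fun g hg => ⟨hg.trans inter_subset_left, hg.trans inter_subset_right⟩⟩
  · exact eq_univ_of_forall fun f => ⟨_, ⟨univ, isOpen_univ, rfl⟩, subset_univ (graphSet f)⟩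

theorem mem_nhds_graphTopology_iff {f : C(X, Y)} {S : Set C(X, Y)} :
    S ∈ @nhds C(X, Y) (graphTopology X Y) f ↔
      ∃ G : Set (X × Y), IsOpen G ∧ graphSet f ⊆ G ∧ {g : C(X, Y) | graphSet g ⊆ G} ⊆ S := by
  rw [@IsTopologicalBasis.mem_nhds_iff _ (graphTopology X Y) _ _ _
    isTopologicalBasis_graphTopology]
  constructor
  · rintro ⟨_, ⟨G, hG, rfl⟩, hfG, hGS⟩
    exact ⟨G, hG, hfG, hGS⟩
  · rintro ⟨G, hG, hfG, hGS⟩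
    exact ⟨_, ⟨G, hG, rfl⟩, hfG, hGS⟩

end GraphTopology

theorem exists_mem_apply_ne_of_mem_nhds_graphTopology {X E : Type*} [TopologicalSpace X]
    [CompletelyRegularSpace X] [NormedAddCommGroup E] [NormedSpace ℝ E] [Nontrivial E]
    {f : C(X, E)} {S : Set C(X, E)} (hS : S ∈ @nhds C(X, E) (graphTopology X E) f) (d : X) :
    ∃ g ∈ S, g d ≠ f d := by
  obtain ⟨G, hG, hfG, hGS⟩ := mem_nhds_graphTopology_iff.mp hS
  obtain ⟨U, V, hU, hV, hdU, hfV, hUV⟩ := isOpen_prod_iff.mp hG d (f d) (hfG rfl)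
  obtain ⟨ε, hε, hball⟩ := Metric.isOpen_iff.mp hV (f d) hfV
  set W := U ∩ f ⁻¹' Metric.ball (f d) (ε / 2)
  have hW : IsOpen W := hU.inter (Metric.isOpen_ball.preimage f.continuous)
  obtain ⟨φ, hφ, hφd, hφW⟩ := CompletelyRegularSpace.completely_regular_isOpen d W hW
    ⟨hdU, Metric.mem_ball_self (half_pos hε)⟩
  obtain ⟨v, hv⟩ := exists_norm_eq E (half_pos hε).le
  let g : C(X, E) := ⟨fun x => f x + (1 - φ x : ℝ) • v, by fun_prop⟩
  refine ⟨g, hGS (graphSet_subset_iff.2 fun x => ?_), ?_⟩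
  · by_cases hx : x ∈ W
    · refine hUV ⟨hx.1, hball ?_⟩
      have hφx : ‖(1 - φ x : ℝ) • v‖ ≤ ε / 2 := by
        rw [norm_smul, hv, Real.norm_of_nonneg (by simp [(φ x).2.2])]
        nlinarith [(φ x).2.1]
      calc dist (g x) (f d) ≤ dist (g x) (f x) + dist (f x) (f d) := dist_triangle ..
        _ = ‖(1 - φ x : ℝ) • v‖ + dist (f x) (f d) := by simp [g, dist_eq_norm]
        _ < ε := by linarith [Metric.mem_ball.1 hx.2]
    · simpa [g, hφW hx] using hfG rfl
  · have hv0 : v ≠ 0 := norm_ne_zero_iff.1 (hv.trans_ne (half_pos hε).ne')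
    simpa [g, hφd] using hv0

/-- for `X` Tychonoff and `D ⊆ X` closed and discrete, every
neighborhood basis `B` of any `f ∈ C(X)` in the graph topology satisfies
`|D| ≤ |B|` (hence the character of `(C(X), τ_Γ)` is at least `|D|`). -/
theorem card_le_card_nhds_basis (X : Type*) [TopologicalSpace X] [T35Space X]
    (D : Set X) (hDclosed : IsClosed D) (hDdiscrete : DiscreteTopology ↥D)
    (f : C(X, ℝ)) (B : Set (Set C(X, ℝ)))
    (hBnhds : ∀ S ∈ B, S ∈ @nhds C(X, ℝ) (graphTopology X ℝ) f)
    (hBbasis : ∀ S ∈ @nhds C(X, ℝ) (graphTopology X ℝ) f, ∃ T ∈ B, T ⊆ S) :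
    Cardinal.mk ↥D ≤ Cardinal.mk ↥B := by
  by_contra! hlt
  obtain ⟨e⟩ := Cardinal.le_def _ _ |>.mp hlt.le
  choose g hgS hgne using fun S : B =>
    exists_mem_apply_ne_of_mem_nhds_graphTopology (hBnhds S S.2) (e S)
  set E : Set (X × ℝ) := ⋃ S : B, {((e S : X), g S (e S))}
  have hE : IsClosed E := isClosed_iUnion_singleton_of_injective hDclosed e.injective _
  have hfE : graphSet f ⊆ Eᶜ := by
    refine graphSet_subset_iff.2 fun x hx => ?_
    obtain ⟨S, hS⟩ := mem_iUnion.1 hx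
    obtain ⟨rfl, hSx⟩ := Prod.ext_iff.1 hS
    exact hgne S hSx.symm
  obtain ⟨T, hTB, hTsub⟩ :=
    hBbasis _ (mem_nhds_graphTopology_iff.2 ⟨Eᶜ, hE.isOpen_compl, hfE, subset_rfl⟩)
  exact graphSet_subset_iff.1 (hTsub (hgS ⟨T, hTB⟩)) _ (mem_iUnion_of_mem ⟨T, hTB⟩ rfl)
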